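/- Let N ≥ 3 and let |ε⟩, |ε'⟩ be two linearly independent single-qubit unit vectors. Let |ψ⟩ be the normalized N-qubit state proportional to Σ_{j=1}^N |ε⟩^{⊗(j−1)} ⊗ |ε'⟩ ⊗ |ε⟩^{⊗(N−j)} (a symmetric state of the SLOCC class D_{N−1,1} of the Dicke state |D_N^{(1)}⟩). Then for every subset S of the qubits with |S| ≤ N−2, the reduced density operator ρ_{¬S}(ψ) is entangled; i.e., |ψ⟩ is robust with respect to the loss of any number t ≤ N−2 of qubits. -/

import Mathlib

open scoped BigOperators ComplexConjugate

noncomputable section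

/-- A single-qubit unit vector in `ℂ²`. -/
def IsUnitQubit (e : Fin 2 → ℂ) : Prop := ∑ j, Complex.normSq (e j) = 1

/-- Norm-one condition for a multiqubit vector on the register `ι`. -/
def IsUnitState {ι : Type*} [Fintype ι] [DecidableEq ι] (ψ : (ι → Fin 2) → ℂ) : Prop :=
  ∑ x, Complex.normSq (ψ x) = 1

/-- The product state `⊗ᵢ eᵢ`. -/
def prodState {ι : Type*} [Fintype ι] (e : ι → Fin 2 → ℂ) : (ι → Fin 2) → ℂ :=
  fun x => ∏ i, e i (x i)

/-- A pure state is a product state if it is a tensor product of single-qubit unit vectors. -/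
def IsProductState {ι : Type*} [Fintype ι] (ψ : (ι → Fin 2) → ℂ) : Prop :=
  ∃ e : ι → Fin 2 → ℂ, (∀ i, IsUnitQubit (e i)) ∧ ψ = prodState e

/-- A pure state is entangled if it is not a product state. -/
def IsEntangledState {ι : Type*} [Fintype ι] (ψ : (ι → Fin 2) → ℂ) : Prop :=
  ¬ IsProductState ψ

/-- The projector `|v⟩⟨v|` as a matrix. -/
def proj {α : Type*} (v : α → ℂ) : Matrix α α ℂ :=
  Matrix.of fun x y => v x * conj (v y)

/-- A density matrix on the qubit register `ι` is separable if it is a finite convex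
combination of projectors onto product states (and entangled otherwise). -/
def IsSeparableDensity {ι : Type*} [Fintype ι] (ρ : Matrix (ι → Fin 2) (ι → Fin 2) ℂ) : Prop :=
  ∃ (n : ℕ) (w : Fin n → ℝ) (e : Fin n → ι → Fin 2 → ℂ),
    (∀ m, 0 ≤ w m) ∧ (∑ m, w m = 1) ∧ (∀ m i, IsUnitQubit (e m i)) ∧
    ρ = ∑ m, (w m : ℂ) • proj (prodState (e m))

/-- Assemble a full assignment of the `N` qubits from an assignment `x` of the qubits outside
`S` and an assignment `z` of the qubits in `S`. -/
def mergeCompl {N : ℕ} (S : Finset (Fin N)) (x : {i : Fin N // i ∉ S} → Fin 2)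
    (z : {i : Fin N // i ∈ S} → Fin 2) : Fin N → Fin 2 :=
  fun i => if h : i ∈ S then z ⟨i, h⟩ else x ⟨i, h⟩

/-- The reduced density operator `ρ_{¬S}(ψ)`: the partial trace of `|ψ⟩⟨ψ|` over the qubits
in `S`. -/
def reducedState {N : ℕ} (ψ : (Fin N → Fin 2) → ℂ) (S : Finset (Fin N)) :
    Matrix ({i : Fin N // i ∉ S} → Fin 2) ({i : Fin N // i ∉ S} → Fin 2) ℂ :=
  Matrix.of fun x y => ∑ z : {i : Fin N // i ∈ S} → Fin 2,
    ψ (mergeCompl S x z) * conj (ψ (mergeCompl S y z))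

/-!
Peres' criterion: the partial transpose of a product projector is again a product projector,
so a separable state has a positive semidefinite partial transpose. For a set `A` of qubits let
`Φ_A` be the sum over `j ∈ A` of the product with `ε'` at `j` and `ε` elsewhere. Splitting `Φ_N`
along `S` gives `ρ_{¬S}(ψ) = |c|² Σ_z |ψ_z⟩⟨ψ_z|` with `ψ_z = ε^{⊗S}(z) Φ_{Sᶜ} + Φ_S(z) ε^{⊗Sᶜ}`.
Pick two kept qubits `i₀ ≠ i₁`, let `(f, g)` be the basis dual to `(ε, ε')` and take
`ω = -δ f ⊗ f̄ + g ⊗ ḡ` on `(i₀, i₁)`, with `f` on every other kept qubit. Only the terms of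
`Φ_{Sᶜ}` with `ε'` at `i₀` or `i₁` survive against `ω`, and
`⟨ω̄| ρ^{Γ_{i₁}} |ω̄⟩ = |c|² (δ² ‖Φ_S‖² - 2δ)`, which is negative for `δ = 1 / (‖Φ_S‖² + 1)`.
-/

open Matrix Function Finset
open scoped ComplexOrder

structure IsDualPair {K : Type*} [Semiring K] (f g ε ε' : Fin 2 → K) : Prop where
  fst_fst : f ⬝ᵥ ε = 1
  fst_snd : f ⬝ᵥ ε' = 0
  snd_fst : g ⬝ᵥ ε = 0
  snd_snd : g ⬝ᵥ ε' = 1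

lemma exists_isDualPair {K : Type*} [Field K] {ε ε' : Fin 2 → K}
    (h : LinearIndependent K ![ε, ε']) : ∃ f g, IsDualPair f g ε ε' := by
  set A : Matrix (Fin 2) (Fin 2) K := of ![ε, ε']
  have hA : A * A⁻¹ = 1 := mul_nonsing_inv A <|
    (isUnit_iff_isUnit_det A).mp (linearIndependent_rows_iff_isUnit.mp h)
  have entry (i j : Fin 2) :
      (fun k => A⁻¹ k j) ⬝ᵥ ![ε, ε'] i = (1 : Matrix (Fin 2) (Fin 2) K) i j := by
    rw [← hA, mul_apply', dotProduct_comm]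
    rfl
  exact ⟨fun k => A⁻¹ k 0, fun k => A⁻¹ k 1, entry 0 0, entry 1 0, entry 0 1, entry 1 1⟩

lemma proj_eq_vecMulVec {α : Type*} (v : α → ℂ) : proj v = vecMulVec v (star v) :=
  rfl

section ProductStates

variable {ι : Type*} [Fintype ι] [DecidableEq ι]

lemma prodState_dotProduct_prodState (p q : ι → Fin 2 → ℂ) :
    prodState p ⬝ᵥ prodState q = ∏ i, p i ⬝ᵥ q i := by
  simp only [dotProduct, prodState, ← prod_mul_distrib, prod_univ_sum, Fintype.piFinset_univ]

lemma sum_normSq_prodState (e : ι → Fin 2 → ℂ) :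
    ∑ x, Complex.normSq (prodState e x) = ∏ i, ∑ k, Complex.normSq (e i k) := by
  simp only [prodState, map_prod, prod_univ_sum, Fintype.piFinset_univ]

lemma prodState_apply_update (p : ι → Fin 2 → ℂ) (x : ι → Fin 2) (i : ι) (v : Fin 2) :
    prodState p (update x i v) = p i v * ∏ j ∈ univ.erase i, p j (x j) := by
  rw [prodState, ← mul_prod_erase _ _ (mem_univ i), update_self]
  congr 1
  exact prod_congr rfl fun j hj => by rw [update_of_ne (ne_of_mem_erase hj)]

lemma prodState_update_apply (p : ι → Fin 2 → ℂ) (i : ι) (v : Fin 2 → ℂ) (x : ι → Fin 2) :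
    prodState (update p i v) x = v (x i) * ∏ j ∈ univ.erase i, p j (x j) := by
  rw [prodState, ← mul_prod_erase _ _ (mem_univ i), update_self]
  congr 1
  exact prod_congr rfl fun j hj => by rw [update_of_ne (ne_of_mem_erase hj)]

end ProductStates

section PartialTranspose

variable {ι : Type*} [DecidableEq ι]

def partialTranspose (i : ι) :
    Matrix (ι → Fin 2) (ι → Fin 2) ℂ →ₗ[ℂ] Matrix (ι → Fin 2) (ι → Fin 2) ℂ where
  toFun ρ := of fun x y => ρ (update x i (y i)) (update y i (x i))
  map_add' _ _ := rfl
  map_smul' _ _ := rfl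

@[simp]
lemma partialTranspose_apply (i : ι) (ρ : Matrix (ι → Fin 2) (ι → Fin 2) ℂ) (x y : ι → Fin 2) :
    partialTranspose i ρ x y = ρ (update x i (y i)) (update y i (x i)) :=
  rfl

variable [Fintype ι]

lemma partialTranspose_vecMulVec_prodState (i : ι) (p q : ι → Fin 2 → ℂ) :
    partialTranspose i (vecMulVec (prodState p) (star (prodState q))) =
      vecMulVec (prodState (update p i (star (q i))))
        (star (prodState (update q i (star (p i))))) := by
  ext x y
  simp only [partialTranspose_apply, vecMulVec_apply, Pi.star_apply, prodState_apply_update,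
    prodState_update_apply, star_mul', star_star]
  ring

theorem IsSeparableDensity.posSemidef_partialTranspose {ρ : Matrix (ι → Fin 2) (ι → Fin 2) ℂ}
    (hρ : IsSeparableDensity ρ) (i : ι) : (partialTranspose i ρ).PosSemidef := by
  obtain ⟨n, w, e, hw, -, -, rfl⟩ := hρ
  rw [map_sum]
  refine posSemidef_sum _ fun m _ => ?_
  rw [map_smul, proj_eq_vecMulVec, partialTranspose_vecMulVec_prodState]
  exact (posSemidef_vecMulVec_self_star _).smul (by exact_mod_cast hw m)

def witnessForm (i : ι) (ω : (ι → Fin 2) → ℂ) :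
    ((ι → Fin 2) → ℂ) →ₗ[ℂ] ((ι → Fin 2) → ℂ) →ₗ⋆[ℂ] ℂ :=
  LinearMap.mk₂'ₛₗ (RingHom.id ℂ) (starRingEnd ℂ)
    (fun u v => ω ⬝ᵥ (partialTranspose i (vecMulVec u (star v)) *ᵥ star ω))
    (fun _ _ _ => by simp only [add_vecMulVec, map_add, add_mulVec, dotProduct_add])
    (fun _ _ _ => by simp only [smul_vecMulVec, map_smul, smul_mulVec, dotProduct_smul]; rfl)
    (fun _ _ _ => by simp only [star_add, vecMulVec_add, map_add, add_mulVec, dotProduct_add])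
    (fun _ _ _ => by
      simp only [star_smul, vecMulVec_smul, map_smul, smul_mulVec, dotProduct_smul]; rfl)

lemma witnessForm_apply (i : ι) (ω u v : (ι → Fin 2) → ℂ) :
    witnessForm i ω u v = ω ⬝ᵥ (partialTranspose i (vecMulVec u (star v)) *ᵥ star ω) :=
  rfl

lemma witnessForm_prodState (i : ι) (ω : (ι → Fin 2) → ℂ) (p q : ι → Fin 2 → ℂ) :
    witnessForm i ω (prodState p) (prodState q) =
      (ω ⬝ᵥ prodState (update p i (star (q i)))) *
        star (ω ⬝ᵥ prodState (update q i (star (p i)))) := by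
  rw [witnessForm_apply, partialTranspose_vecMulVec_prodState, vecMulVec_mulVec,
    star_dotProduct_star, op_smul_eq_smul, dotProduct_smul, smul_eq_mul, mul_comm]

lemma dotProduct_partialTranspose_sum_mulVec {κ : Type*} [Fintype κ] (i : ι)
    (ω : (ι → Fin 2) → ℂ) (φ : κ → (ι → Fin 2) → ℂ) :
    ω ⬝ᵥ (partialTranspose i (∑ k, vecMulVec (φ k) (star (φ k))) *ᵥ star ω) =
      ∑ k, witnessForm i ω (φ k) (φ k) := by
  simp only [map_sum, sum_mulVec, dotProduct_sum, witnessForm_apply]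

end PartialTranspose

def dickeVec {ι : Type*} [Fintype ι] [DecidableEq ι] (ε ε' : Fin 2 → ℂ) : (ι → Fin 2) → ℂ :=
  ∑ j, prodState (update (fun _ => ε) j ε')

section Restrict

variable {α β : Type*} [DecidableEq α] {p : α → Prop} (b c : β)

lemma update_const_comp_val (j : Subtype p) :
    (fun i : Subtype p => update (fun _ => b) (j : α) c i) = update (fun _ => b) j c :=
  update_comp_eq_of_injective _ Subtype.val_injective _ _

lemma update_const_comp_val_of_not {j : α} (hj : ¬ p j) :
    (fun i : Subtype p => update (fun _ => b) j c i) = fun _ => b :=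
  funext fun i => update_of_ne (fun h : (i : α) = j => hj (h ▸ i.2)) _ _

end Restrict

section MergeCompl

variable {N : ℕ} (S : Finset (Fin N))

lemma reducedState_eq_sum_vecMulVec (ψ : (Fin N → Fin 2) → ℂ) :
    reducedState ψ S = ∑ z, vecMulVec (fun x => ψ (mergeCompl S x z))
      (star fun x => ψ (mergeCompl S x z)) := by
  ext x y
  simp [reducedState, Matrix.sum_apply, vecMulVec_apply]

lemma prodState_mergeCompl (p : Fin N → Fin 2 → ℂ) (x : {i // i ∉ S} → Fin 2)
    (z : {i // i ∈ S} → Fin 2) :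
    prodState p (mergeCompl S x z) =
      prodState (fun i : {i // i ∉ S} => p i) x * prodState (fun i : {i // i ∈ S} => p i) z := by
  rw [prodState, ← prod_compl_mul_prod S, prod_subtype Sᶜ (fun _ => mem_compl),
    prod_subtype S (fun _ => Iff.rfl)]
  congr 1 <;> exact prod_congr rfl fun i _ => by simp [mergeCompl, i.2]

lemma dickeVec_mergeCompl (ε ε' : Fin 2 → ℂ) (x : {i // i ∉ S} → Fin 2)
    (z : {i // i ∈ S} → Fin 2) :
    dickeVec ε ε' (mergeCompl S x z) =
      prodState (fun _ => ε) z * dickeVec ε ε' x + dickeVec ε ε' z * prodState (fun _ => ε) x := by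
  simp only [dickeVec, Finset.sum_apply, prodState_mergeCompl, sum_mul, mul_sum]
  rw [← sum_compl_add_sum S, sum_subtype Sᶜ (fun _ => mem_compl),
    sum_subtype S (fun _ => Iff.rfl)]
  congr 1 <;> refine sum_congr rfl fun j _ => ?_
  · rw [update_const_comp_val, update_const_comp_val_of_not _ _ j.2, mul_comm]
  · rw [update_const_comp_val, update_const_comp_val_of_not (p := (· ∉ S)) _ _ (not_not_intro j.2),
      mul_comm]

end MergeCompl

section Witness

variable {ι : Type*} [Fintype ι] [DecidableEq ι] {f g ε ε' : Fin 2 → ℂ} {i₀ i₁ : ι} (δ : ℝ)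

-- Both terms have the same shape (the first with `f` redundantly at `i₀`), so that
-- `prodState_update_update_dotProduct` evaluates each of them.
def witness (f g : Fin 2 → ℂ) (i₀ i₁ : ι) (δ : ℝ) : (ι → Fin 2) → ℂ :=
  -(δ : ℂ) • prodState (update (update (fun _ => f) i₀ f) i₁ (star f)) +
    prodState (update (update (fun _ => f) i₀ g) i₁ (star g))

lemma prodState_update_update_dotProduct (hi : i₀ ≠ i₁) (a : Fin 2 → ℂ) (p : ι → Fin 2 → ℂ)
    (m : Fin 2 → ℂ) :
    prodState (update (update (fun _ => f) i₀ a) i₁ (star a)) ⬝ᵥ prodState (update p i₁ (star m)) =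
      (a ⬝ᵥ p i₀) * star (a ⬝ᵥ m) * ∏ k ∈ (univ.erase i₁).erase i₀, f ⬝ᵥ p k := by
  rw [prodState_dotProduct_prodState, ← mul_prod_erase _ _ (mem_univ i₁),
    ← mul_prod_erase _ _ (mem_erase.2 ⟨hi, mem_univ _⟩)]
  simp only [update_self, update_of_ne hi, star_dotProduct_star, dotProduct_comm m]
  rw [← mul_assoc, mul_comm (star _)]
  congr 1
  refine prod_congr rfl fun k hk => ?_
  have hk₁ : k ≠ i₁ := ne_of_mem_erase (mem_of_mem_erase hk)
  rw [update_of_ne hk₁, update_of_ne (ne_of_mem_erase hk), update_of_ne hk₁]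

lemma witness_dotProduct_prodState_update (hi : i₀ ≠ i₁) (p : ι → Fin 2 → ℂ) (m : Fin 2 → ℂ) :
    witness f g i₀ i₁ δ ⬝ᵥ prodState (update p i₁ (star m)) =
      (-δ * (f ⬝ᵥ p i₀) * star (f ⬝ᵥ m) + (g ⬝ᵥ p i₀) * star (g ⬝ᵥ m)) *
        ∏ k ∈ (univ.erase i₁).erase i₀, f ⬝ᵥ p k := by
  rw [witness, add_dotProduct, smul_dotProduct, prodState_update_update_dotProduct hi,
    prodState_update_update_dotProduct hi, smul_eq_mul]
  ring

lemma witness_dotProduct_const (hi : i₀ ≠ i₁) (hd : IsDualPair f g ε ε') (m : Fin 2 → ℂ) :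
    witness f g i₀ i₁ δ ⬝ᵥ prodState (update (fun _ => ε) i₁ (star m)) = -δ * star (f ⬝ᵥ m) := by
  simp [witness_dotProduct_prodState_update δ hi, hd.fst_fst, hd.snd_fst]

lemma witness_dotProduct_single_fst (hi : i₀ ≠ i₁) (hd : IsDualPair f g ε ε') (m : Fin 2 → ℂ) :
    witness f g i₀ i₁ δ ⬝ᵥ prodState (update (update (fun _ => ε) i₀ ε') i₁ (star m)) =
      star (g ⬝ᵥ m) := by
  rw [witness_dotProduct_prodState_update δ hi, update_self, hd.fst_snd, hd.snd_snd,
    prod_congr rfl fun k hk => by rw [update_of_ne (ne_of_mem_erase hk), hd.fst_fst]]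
  simp

lemma witness_dotProduct_single_of_ne (hi : i₀ ≠ i₁) (hd : IsDualPair f g ε ε') {j : ι}
    (hj₀ : j ≠ i₀) (hj₁ : j ≠ i₁) (m : Fin 2 → ℂ) :
    witness f g i₀ i₁ δ ⬝ᵥ prodState (update (update (fun _ => ε) j ε') i₁ (star m)) = 0 := by
  rw [witness_dotProduct_prodState_update δ hi,
    prod_eq_zero (mem_erase.2 ⟨hj₀, mem_erase.2 ⟨hj₁, mem_univ _⟩⟩)
      (by rw [update_self, hd.fst_snd]), mul_zero]

lemma witnessForm_single_left_eq_zero (hi : i₀ ≠ i₁) (hd : IsDualPair f g ε ε') {j : ι}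
    (hj : j ≠ i₀ ∧ j ≠ i₁) (q : ι → Fin 2 → ℂ) :
    witnessForm i₁ (witness f g i₀ i₁ δ) (prodState (update (fun _ => ε) j ε')) (prodState q) =
      0 := by
  rw [witnessForm_prodState, witness_dotProduct_single_of_ne δ hi hd hj.1 hj.2, zero_mul]

lemma witnessForm_single_right_eq_zero (hi : i₀ ≠ i₁) (hd : IsDualPair f g ε ε') {j : ι}
    (hj : j ≠ i₀ ∧ j ≠ i₁) (p : ι → Fin 2 → ℂ) :
    witnessForm i₁ (witness f g i₀ i₁ δ) (prodState p) (prodState (update (fun _ => ε) j ε')) =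
      0 := by
  rw [witnessForm_prodState, witness_dotProduct_single_of_ne δ hi hd hj.1 hj.2, star_zero, mul_zero]

lemma witnessForm_dickeVec_dickeVec (hi : i₀ ≠ i₁) (hd : IsDualPair f g ε ε') :
    witnessForm i₁ (witness f g i₀ i₁ δ) (dickeVec ε ε') (dickeVec ε ε') = -2 * δ := by
  simp only [dickeVec, map_sum, LinearMap.sum_apply]
  rw [Fintype.sum_eq_add i₀ i₁ hi fun j hj => sum_eq_zero fun _ _ =>
      witnessForm_single_right_eq_zero δ hi hd hj _,
    Fintype.sum_eq_add i₀ i₁ hi fun j hj => witnessForm_single_left_eq_zero δ hi hd hj _,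
    Fintype.sum_eq_add i₀ i₁ hi fun j hj => witnessForm_single_left_eq_zero δ hi hd hj _]
  simp only [witnessForm_prodState, update_of_ne hi.symm, witness_dotProduct_single_fst δ hi hd,
    hd.snd_fst, star_zero, mul_zero, update_idem, witness_dotProduct_const δ hi hd, hd.fst_fst,
    star_one, mul_one, update_self, hd.snd_snd, zero_add, star_neg, RCLike.star_def,
    Complex.conj_ofReal, mul_neg, one_mul, hd.fst_snd, add_zero, neg_mul]
  ring

lemma witnessForm_dickeVec_const (hi : i₀ ≠ i₁) (hd : IsDualPair f g ε ε') :
    witnessForm i₁ (witness f g i₀ i₁ δ) (dickeVec ε ε') (prodState fun _ => ε) = 0 := by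
  simp only [dickeVec, map_sum, LinearMap.sum_apply]
  rw [Fintype.sum_eq_add i₀ i₁ hi fun j hj => witnessForm_single_left_eq_zero δ hi hd hj _]
  simp [witnessForm_prodState, update_of_ne hi.symm, witness_dotProduct_single_fst δ hi hd,
    witness_dotProduct_const δ hi hd, hd.fst_snd, hd.snd_fst]

lemma witnessForm_const_dickeVec (hi : i₀ ≠ i₁) (hd : IsDualPair f g ε ε') :
    witnessForm i₁ (witness f g i₀ i₁ δ) (prodState fun _ => ε) (dickeVec ε ε') = 0 := by
  simp only [dickeVec, map_sum]
  rw [Fintype.sum_eq_add i₀ i₁ hi fun j hj => witnessForm_single_right_eq_zero δ hi hd hj _]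
  simp [witnessForm_prodState, update_of_ne hi.symm, witness_dotProduct_single_fst δ hi hd,
    witness_dotProduct_const δ hi hd, hd.fst_snd, hd.snd_fst]

lemma witnessForm_const_const (hi : i₀ ≠ i₁) (hd : IsDualPair f g ε ε') :
    witnessForm i₁ (witness f g i₀ i₁ δ) (prodState fun _ => ε) (prodState fun _ => ε) = δ ^ 2 := by
  simp only [witnessForm_prodState, witness_dotProduct_const δ hi hd, hd.fst_fst, star_one, mul_one,
    star_neg, RCLike.star_def, Complex.conj_ofReal, mul_neg, neg_mul, neg_neg]
  ring

lemma witnessForm_smul_dickeVec_add_smul_const (hi : i₀ ≠ i₁) (hd : IsDualPair f g ε ε')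
    (a b : ℂ) :
    witnessForm i₁ (witness f g i₀ i₁ δ) (a • dickeVec ε ε' + b • prodState fun _ => ε)
      (a • dickeVec ε ε' + b • prodState fun _ => ε) =
      ((δ ^ 2 * Complex.normSq b - 2 * δ * Complex.normSq a : ℝ) : ℂ) := by
  simp only [map_add, map_smul, map_smulₛₗ, LinearMap.add_apply, LinearMap.smul_apply,
    witnessForm_dickeVec_dickeVec δ hi hd, witnessForm_dickeVec_const δ hi hd,
    witnessForm_const_dickeVec δ hi hd, witnessForm_const_const δ hi hd]
  push_cast
  rw [← Complex.mul_conj, ← Complex.mul_conj]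
  simp only [smul_eq_mul]
  ring

end Witness

lemma witness_partialTranspose_reducedState {N : ℕ} {S : Finset (Fin N)} {f g ε ε' : Fin 2 → ℂ}
    {i₀ i₁ : {i // i ∉ S}} (δ : ℝ) (hi : i₀ ≠ i₁) (hd : IsDualPair f g ε ε')
    (hε : IsUnitQubit ε) (c : ℂ) :
    witness f g i₀ i₁ δ ⬝ᵥ (partialTranspose i₁ (reducedState (c • dickeVec ε ε') S) *ᵥ
      star (witness f g i₀ i₁ δ)) =
      ((Complex.normSq c *
        (δ ^ 2 * ∑ z : {i // i ∈ S} → Fin 2, Complex.normSq (dickeVec ε ε' z) - 2 * δ) : ℝ) :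
        ℂ) := by
  have slice (z : {i // i ∈ S} → Fin 2) : (fun x => (c • dickeVec ε ε') (mergeCompl S x z)) =
      c • (prodState (fun _ => ε) z • dickeVec ε ε' + dickeVec ε ε' z • prodState fun _ => ε) := by
    ext x
    simp [dickeVec_mergeCompl, mul_add, mul_comm]
  have hU : ∑ z : {i // i ∈ S} → Fin 2, Complex.normSq (prodState (fun _ => ε) z) = 1 := by
    rw [sum_normSq_prodState, prod_eq_one fun _ _ => hε]
  rw [reducedState_eq_sum_vecMulVec, dotProduct_partialTranspose_sum_mulVec]
  simp only [slice, map_smul, map_smulₛₗ, LinearMap.smul_apply,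
    witnessForm_smul_dickeVec_add_smul_const δ hi hd]
  simp only [smul_eq_mul, ← mul_assoc, Complex.conj_mul', ← Complex.ofReal_pow,
    ← Complex.normSq_eq_norm_sq, ← Complex.ofReal_mul, ← Complex.ofReal_sum]
  rw [← mul_sum, sum_sub_distrib, ← mul_sum, ← mul_sum, hU, mul_one]

theorem dickeClass_W_robust_general {N : ℕ} (hN : 3 ≤ N)
    (ε ε' : Fin 2 → ℂ) (hε : IsUnitQubit ε)
    (hli : LinearIndependent ℂ ![ε, ε'])
    (ψ : (Fin N → Fin 2) → ℂ)
    (c : ℂ) (hc : c ≠ 0)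
    (hψ : ψ = fun x => c *
      ∑ j : Fin N, prodState (Function.update (fun _ : Fin N => ε) j ε') x) :
    ∀ S : Finset (Fin N), S.card ≤ N - 2 →
      ¬ IsSeparableDensity (reducedState ψ S) := by
  intro S hS hsep
  obtain ⟨i₀, i₁, hi⟩ : ∃ i₀ i₁ : {i // i ∉ S}, i₀ ≠ i₁ := Fintype.one_lt_card_iff.mp <| by
    rw [Fintype.card_subtype_compl, Fintype.card_fin, Fintype.card_coe]
    omega
  obtain ⟨f, g, hd⟩ := exists_isDualPair hli
  have hψ' : ψ = c • dickeVec ε ε' := by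
    ext x
    simp [hψ, dickeVec, Finset.sum_apply]
  set T := ∑ z : {i // i ∈ S} → Fin 2, Complex.normSq (dickeVec ε ε' z)
  have hT : 0 ≤ T := sum_nonneg fun _ _ => Complex.normSq_nonneg _
  have hneg : (1 / (T + 1)) ^ 2 * T - 2 * (1 / (T + 1)) < 0 := by
    field_simp
    nlinarith
  have key := (hsep.posSemidef_partialTranspose i₁).dotProduct_mulVec_nonneg
    (star (witness f g i₀ i₁ (1 / (T + 1))))
  rw [star_star, hψ', witness_partialTranspose_reducedState _ hi hd hε, Complex.zero_le_real] at key
  nlinarith [Complex.normSq_pos.mpr hc]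

/-- Let `N ≥ 3` and let `ε`, `ε'` be linearly independent single-qubit unit
vectors.  Every normalized `N`-qubit state proportional to
`Σ_{j=1}^N |ε⟩^{⊗(j−1)} ⊗ |ε'⟩ ⊗ |ε⟩^{⊗(N−j)}` (a symmetric state of the SLOCC class
`D_{N−1,1}` of `|D_N^{(1)}⟩`) is robust with respect to the loss of any `t ≤ N − 2` qubits:
for every subset `S` with `|S| ≤ N − 2`, the reduced state `ρ_{¬S}(ψ)` is entangled. -/
theorem dickeClass_W_robust {N : ℕ} (hN : 3 ≤ N)
    (ε ε' : Fin 2 → ℂ) (hε : IsUnitQubit ε) (hε' : IsUnitQubit ε')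
    (hli : LinearIndependent ℂ ![ε, ε'])
    (ψ : (Fin N → Fin 2) → ℂ) (hunit : IsUnitState ψ)
    (c : ℂ) (hc : c ≠ 0)
    (hψ : ψ = fun x => c *
      ∑ j : Fin N, prodState (Function.update (fun _ : Fin N => ε) j ε') x) :
    ∀ S : Finset (Fin N), S.card ≤ N - 2 →
      ¬ IsSeparableDensity (reducedState ψ S) :=
  dickeClass_W_robust_general hN ε ε' hε hli ψ c hc hψ
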